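/- Let X₁, …, Xₙ be i.i.d. real-valued random variables with common distribution D having CDF F, let α ∈ (0,1), Δ > 0 with α + Δ < 1, and β ∈ (0,1). Define the population quantile q_τ := inf{x : F(x) ≥ τ} and the empirical quantile q̂_α := inf{x : #{i : Xᵢ ≤ x} ≥ α·n}. If n ≥ (1/(2Δ²))·log(1/β), then Pr( q̂_α > q_{α+Δ} ) ≤ β. -/

import Mathlib

/-!
Let `q = q_{α+Δ}` and `p = F(q)`. Right-continuity of `F` gives `p ≥ α + Δ`, and
`q̂_α > q` forces fewer than `α n` samples to lie in `(-∞, q]`, i.e. the empirical CDF at `q`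
falls at least `Δ` below its mean `p`. The indicators of `{Xᵢ ≤ q}` are independent and
`[0, 1]`-valued, so by Hoeffding's inequality this has probability at most
`exp (-2 n Δ²) ≤ β`.
-/

open MeasureTheory ProbabilityTheory

/-- The CDF of a distribution `D` on `ℝ`. -/
noncomputable def distCdf (D : Measure ℝ) (x : ℝ) : ℝ := (D (Set.Iic x)).toReal

/-- The population `τ`-quantile `q_τ := inf {x : F(x) ≥ τ}`. -/
noncomputable def popQuantile (D : Measure ℝ) (τ : ℝ) : ℝ :=
  sInf {x : ℝ | τ ≤ distCdf D x}

/-- The empirical `γ`-quantile `q̂_γ := inf {x : #{i : Xᵢ ≤ x} ≥ γ·n}`. -/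
noncomputable def empQuantile {n : ℕ} (X : Fin n → ℝ) (γ : ℝ) : ℝ :=
  sInf {x : ℝ | γ * (n : ℝ) ≤ ((Finset.univ.filter (fun i => X i ≤ x)).card : ℝ)}

theorem StieltjesFunction.le_apply_sInf_setOf_le (f : StieltjesFunction ℝ) {τ : ℝ}
    (hne : {x | τ ≤ f x}.Nonempty) :
    τ ≤ f (sInf {x | τ ≤ f x}) := by
  -- no lower bound is needed: a nonempty upper set of `ℝ` that is unbounded below is `univ`
  set q := sInf {x | τ ≤ f x}
  have hright : ∀ x ∈ Set.Ioi q, τ ≤ f x := fun x hx => by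
    obtain ⟨s, hs, hsx⟩ := exists_lt_of_csInf_lt hne hx
    exact hs.trans (f.mono hsx.le)
  exact ge_of_tendsto ((f.right_continuous q).mono Set.Ioi_subset_Ici_self)
    (eventually_nhdsWithin_of_forall hright)

theorem distCdf_eq_cdf (D : Measure ℝ) [IsProbabilityMeasure D] : distCdf D = cdf D := by
  ext x
  rw [cdf_eq_real, measureReal_def, distCdf]

theorem le_distCdf_popQuantile (D : Measure ℝ) [IsProbabilityMeasure D] {τ : ℝ}
    (hτ : τ < 1) : τ ≤ distCdf D (popQuantile D τ) := by
  rw [popQuantile, distCdf_eq_cdf]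
  exact (cdf D).le_apply_sInf_setOf_le ((tendsto_cdf_atTop D).eventually_const_le hτ).exists

theorem empQuantile_le_of_le_card {n : ℕ} (X : Fin n → ℝ) {γ x : ℝ} (hγn : 0 < γ * n)
    (hx : γ * n ≤ (Finset.univ.filter (fun i => X i ≤ x)).card) : empQuantile X γ ≤ x := by
  obtain ⟨b, hb⟩ := (Set.finite_range X).bddBelow
  refine csInf_le ⟨b, fun y hy => ?_⟩ hx
  obtain ⟨i, hi⟩ : (Finset.univ.filter (fun i => X i ≤ y)).Nonempty :=
    Finset.card_pos.1 (by exact_mod_cast hγn.trans_le hy)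
  exact (hb ⟨i, rfl⟩).trans (Finset.mem_filter.1 hi).2

theorem measureReal_card_le_le_exp {Ω : Type*} [MeasurableSpace Ω] {μ : Measure Ω}
    [IsProbabilityMeasure μ] {n : ℕ} {X : Fin n → Ω → ℝ} (hmeas : ∀ i, Measurable (X i))
    (hindep : iIndepFun X μ) {D : Measure ℝ} (hid : ∀ i, Measure.map (X i) μ = D)
    (x : ℝ) {t : ℝ} (ht : 0 ≤ t) :
    μ.real {ω | ((Finset.univ.filter (fun i => X i ω ≤ x)).card : ℝ) ≤ n * (distCdf D x - t)}
      ≤ Real.exp (-2 * n * t ^ 2) := by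
  -- negated, so that the lower tail of the count is the upper tail bounded by Hoeffding
  set g : ℝ → ℝ := fun y => -(Set.Iic x).indicator 1 y
  have hg : Measurable g := (measurable_one.indicator measurableSet_Iic).neg
  have hmean : ∀ i, ∫ ω, g (X i ω) ∂μ = -distCdf D x := fun i => by
    rw [← integral_map (hmeas i).aemeasurable hg.aestronglyMeasurable, hid i, integral_neg,
      integral_indicator_one measurableSet_Iic, measureReal_def, distCdf]
  have hbound : ∀ y, g y ∈ Set.Icc (-1) 0 := fun y => by
    by_cases hy : y ≤ x <;> simp [g, hy]
  set p := distCdf D x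
  have hsubG : ∀ i, HasSubgaussianMGF (fun ω => g (X i ω) + p) (1 / 4) μ := fun i => by
    have h := hasSubgaussianMGF_of_mem_Icc (μ := μ) (hg.comp (hmeas i)).aemeasurable
      (ae_of_all _ fun ω => hbound (X i ω))
    norm_num [hmean] at h
    exact h
  have hindepY : iIndepFun (fun i ω => g (X i ω) + p) μ :=
    hindep.comp (fun _ y => g y + p) fun _ => hg.add_const _
  have hoeffding := HasSubgaussianMGF.measure_sum_ge_le_of_iIndepFun hindepY (s := Finset.univ)
    (fun i _ => hsubG i) (ε := n * t) (by positivity)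
  have hsum : ∀ ω, ∑ i, (g (X i ω) + p)
      = n * p - ((Finset.univ.filter (fun i => X i ω ≤ x)).card : ℝ) := fun ω => by
    simp only [g, Set.indicator_apply, Set.mem_Iic, Pi.one_apply, Finset.sum_add_distrib,
      Finset.sum_neg_distrib, Finset.sum_boole, Finset.sum_const, Finset.card_univ,
      Fintype.card_fin, nsmul_eq_mul]
    ring
  have hexp : -(n * t) ^ 2 / (2 * ((∑ _i : Fin n, (1 / 4 : NNReal) : NNReal) : ℝ))
      = -2 * n * t ^ 2 := by
    rcases n.eq_zero_or_pos with rfl | hn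
    · simp
    · push_cast [Finset.sum_const, Finset.card_univ, Fintype.card_fin, nsmul_eq_mul]
      field_simp
      ring
  calc _ = μ.real {ω | n * t ≤ ∑ i, (g (X i ω) + p)} := by
        congr 1; ext ω; simp only [Set.mem_ofPred_eq, hsum]; constructor <;> intro <;> linarith
    _ ≤ _ := hoeffding
    _ = _ := by rw [hexp]

/-- For i.i.d. samples from `D`, if `n ≥ (1/(2Δ²))·log(1/β)` then
the empirical `α`-quantile exceeds the population `(α+Δ)`-quantile with
probability at most `β`. -/
theorem empirical_quantile_upper_shift
    {Ω : Type*} [MeasurableSpace Ω] (μ : Measure Ω) [IsProbabilityMeasure μ]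
    (n : ℕ) (X : Fin n → Ω → ℝ) (hmeas : ∀ i, Measurable (X i))
    (D : Measure ℝ) [IsProbabilityMeasure D]
    (hindep : iIndepFun X μ)
    (hid : ∀ i, Measure.map (X i) μ = D)
    (α Δ β : ℝ) (hα : α ∈ Set.Ioo (0 : ℝ) 1) (hΔ : 0 < Δ) (hαΔ : α + Δ < 1)
    (hβ : β ∈ Set.Ioo (0 : ℝ) 1)
    (hn : (n : ℝ) ≥ (1 / (2 * Δ ^ 2)) * Real.log (1 / β)) :
    μ {ω | popQuantile D (α + Δ) < empQuantile (fun i => X i ω) α}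
      ≤ ENNReal.ofReal β := by
  obtain ⟨hβ0, hβ1⟩ := hβ
  set q := popQuantile D (α + Δ)
  have hq : α + Δ ≤ distCdf D q := le_distCdf_popQuantile D hαΔ
  have hlog : Real.log (1 / β) ≤ n * (2 * Δ ^ 2) := by
    rwa [ge_iff_le, one_div_mul_eq_div, div_le_iff₀ (by positivity)] at hn
  have hn0 : (0 : ℝ) < n := by
    have : 0 < Real.log (1 / β) := Real.log_pos (one_lt_one_div hβ0 hβ1)
    nlinarith
  have hevent : {ω | q < empQuantile (fun i => X i ω) α}
      ⊆ {ω | ((Finset.univ.filter (fun i => X i ω ≤ q)).card : ℝ) ≤ n * (distCdf D q - Δ)} :=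
    fun ω hω => by
      by_contra hcard
      refine (not_le.2 hω) (empQuantile_le_of_le_card _ (mul_pos hα.1 hn0) ?_)
      nlinarith [Set.notMem_ofPred_iff.1 hcard]
  have htail : Real.exp (-2 * n * Δ ^ 2) ≤ β := by
    rw [← Real.exp_log hβ0, Real.exp_le_exp]
    rw [one_div, Real.log_inv] at hlog
    linarith
  calc _ ≤ _ := measure_mono hevent
    _ = ENNReal.ofReal (μ.real _) := (ofReal_measureReal).symm
    _ ≤ ENNReal.ofReal β := ENNReal.ofReal_le_ofReal
          ((measureReal_card_le_le_exp hmeas hindep hid q hΔ.le).trans htail)
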